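/- Fix an integer T ≥ 1 and a dimension d ≥ 1. Let F ⊂ ℝ^d be a Borel set and let ρ be a Borel probability measure on ℝ^d with ρ(F) = 1. Suppose there are an integer M₀ ≥ 2 and s > 0 such that for every integer M ≥ M₀ and every Borel subset F' ⊂ F with ρ(F') > M^{−2}, the number N(F', M) of dyadic cubes of side length 2^{−TM} intersecting F' is at least 2^{sTM}. Then the s-dimensional Hausdorff measure of F satisfies H^s(F) ≥ c for some constant c > 0 depending only on T and d; in particular dimH(F) ≥ s. -/

import Mathlib

open MeasureTheory
open scoped ENNReal NNReal

/-- The half-open dyadic cube of side length `2⁻ⁿ` in `ℝ^d` indexed by `k ∈ ℤ^d`. -/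
def dyadicCube (d n : ℕ) (k : Fin d → ℤ) : Set (EuclideanSpace ℝ (Fin d)) :=
  {x | ∀ i, (k i : ℝ) / 2 ^ n ≤ x i ∧ x i < ((k i : ℝ) + 1) / 2 ^ n}

/-!
Mass distribution by pigeonhole over scales. Take a cover of `F` by sets `tₙ` of diameter at
most `2^{-TM₀}`. A set of diameter zero carries no `ρ`-mass of `F`, since it meets only one cube
while the hypothesis demands `2^{sTM} > 1`. Every other `tₙ` has a scale `M > M₀` with
`2^{-TM} < diam tₙ ≤ 2^{T-TM}`. As `∑_{M > M₀} M⁻² < 1`, the sets of some scale `M` cover mass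
more than `M⁻²` of `F`, so together they meet at least `2^{sTM}` cubes of side `2^{-TM}`. Each
of them meets at most `(2^{T+1}+1)^d` such cubes, so there are at least
`2^{sTM} / (2^{T+1}+1)^d` of them, each contributing `diam^s ≥ 2^{-sTM}` to the Hausdorff sum.
-/

open Set

lemma floor_mem_Icc_of_abs_sub_le {u v : ℝ} {r : ℤ} (h : |u - v| ≤ r) :
    ⌊u⌋ ∈ Finset.Icc (⌊v⌋ - r) (⌊v⌋ + r) := by
  obtain ⟨hlo, hhi⟩ := abs_le.1 h
  rw [Finset.mem_Icc, ← Int.floor_sub_intCast, ← Int.floor_add_intCast]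
  exact ⟨Int.floor_mono (by linarith), Int.floor_mono (by linarith)⟩

section DyadicCount

open Metric

variable {d : ℕ}

lemma mem_dyadicCube_iff {n : ℕ} {k : Fin d → ℤ} {x : EuclideanSpace ℝ (Fin d)} :
    x ∈ dyadicCube d n k ↔ ∀ i, k i = ⌊(2 : ℝ) ^ n * x i⌋ := by
  have h2 : (0 : ℝ) < 2 ^ n := by positivity
  simp only [dyadicCube, mem_ofPred_eq, div_le_iff₀ h2, lt_div_iff₀ h2, eq_comm (a := k _),
    Int.floor_eq_iff, mul_comm (x _)]

open Classical in
/-- `dyadicCount d (T * j) A` is the paper's `N(A, j)`. -/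
noncomputable def dyadicCount (d n : ℕ) (A : Set (EuclideanSpace ℝ (Fin d))) : ℝ≥0∞ :=
  ∑' k : Fin d → ℤ, if (dyadicCube d n k ∩ A).Nonempty then 1 else 0

lemma dyadicCount_mono {n : ℕ} {A B : Set (EuclideanSpace ℝ (Fin d))} (h : A ⊆ B) :
    dyadicCount d n A ≤ dyadicCount d n B := by
  refine ENNReal.tsum_le_tsum fun k => ?_
  split_ifs with hA hB
  · exact le_rfl
  · exact absurd (hA.mono (inter_subset_inter_right _ h)) hB
  all_goals exact zero_le

lemma dyadicCount_iUnion_le {ι : Type*} (n : ℕ) (A : ι → Set (EuclideanSpace ℝ (Fin d))) :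
    dyadicCount d n (⋃ i, A i) ≤ ∑' i, dyadicCount d n (A i) := by
  simp only [dyadicCount]
  rw [ENNReal.tsum_comm]
  refine ENNReal.tsum_le_tsum fun k => ?_
  split_ifs with h
  · obtain ⟨x, hxk, hxA⟩ := h
    obtain ⟨i, hi⟩ := mem_iUnion.1 hxA
    refine le_trans ?_ (ENNReal.le_tsum i)
    rw [if_pos ⟨x, hxk, hi⟩]
  · exact zero_le

lemma dyadicCount_le_card {n : ℕ} {A : Set (EuclideanSpace ℝ (Fin d))}
    (B : Finset (Fin d → ℤ)) (hB : ∀ k, (dyadicCube d n k ∩ A).Nonempty → k ∈ B) :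
    dyadicCount d n A ≤ B.card := by
  classical
  calc dyadicCount d n A ≤ ∑' k, if k ∈ B then (1 : ℝ≥0∞) else 0 := by
        refine ENNReal.tsum_le_tsum fun k => ?_
        split_ifs with hA hk <;> simp_all
    _ = B.card := by
        rw [tsum_eq_sum (s := B) fun k hk => if_neg hk, Finset.sum_boole]
        simp

lemma dyadicCount_le_one_of_subsingleton {n : ℕ} {A : Set (EuclideanSpace ℝ (Fin d))}
    (hA : A.Subsingleton) : dyadicCount d n A ≤ 1 := by
  rcases hA.eq_empty_or_singleton with rfl | ⟨x, rfl⟩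
  · simp [dyadicCount]
  · refine (dyadicCount_le_card {fun i => ⌊(2 : ℝ) ^ n * x i⌋} fun k ⟨y, hyk, hy⟩ => ?_).trans
      (by simp)
    rw [mem_singleton_iff.1 hy] at hyk
    exact Finset.mem_singleton.2 (funext (mem_dyadicCube_iff.1 hyk))

lemma dyadicCount_le_of_ediam_le {n a : ℕ} {A : Set (EuclideanSpace ℝ (Fin d))}
    (hA : ediam A ≤ 2 ^ a * ((2 : ℝ≥0∞) ^ n)⁻¹) :
    dyadicCount d n A ≤ ((2 * 2 ^ a + 1 : ℕ) : ℝ≥0∞) ^ d := by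
  rcases A.eq_empty_or_nonempty with rfl | ⟨x, hx⟩
  · simp [dyadicCount]
  have h2 : (0 : ℝ) < 2 ^ n := by positivity
  have hr : 2 ^ a * ((2 : ℝ≥0∞) ^ n)⁻¹ = ENNReal.ofReal (2 ^ a / 2 ^ n) := by
    rw [ENNReal.ofReal_div_of_pos h2, div_eq_mul_inv]; simp
  have hbox : ∀ k, (dyadicCube d n k ∩ A).Nonempty →
      k ∈ Fintype.piFinset fun i =>
        Finset.Icc (⌊(2 : ℝ) ^ n * x i⌋ - 2 ^ a) (⌊(2 : ℝ) ^ n * x i⌋ + 2 ^ a) := by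
    rintro k ⟨y, hyk, hy⟩
    have hdist : dist y x ≤ 2 ^ a / 2 ^ n :=
      (edist_le_ofReal (by positivity)).1 ((edist_le_ediam_of_mem hy hx).trans (hr ▸ hA))
    refine Fintype.mem_piFinset.2 fun i =>
      (mem_dyadicCube_iff.1 hyk i) ▸ floor_mem_Icc_of_abs_sub_le ?_
    rw [← mul_sub, abs_mul, abs_of_pos h2, ← Real.dist_eq]
    calc 2 ^ n * dist (y i) (x i) ≤ 2 ^ n * (2 ^ a / 2 ^ n) :=
          mul_le_mul_of_nonneg_left ((PiLp.dist_apply_le y x i).trans hdist) h2.le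
      _ = ((2 ^ a : ℤ) : ℝ) := by push_cast; field_simp
  refine (dyadicCount_le_card _ hbox).trans (le_of_eq ?_)
  have hcard (z : ℤ) : (Finset.Icc (z - 2 ^ a) (z + 2 ^ a)).card = 2 * 2 ^ a + 1 := by
    rw [Int.card_Icc, show (2 : ℤ) ^ a = ((2 ^ a : ℕ) : ℤ) by push_cast; rfl]; omega
  simp [Fintype.card_piFinset, hcard]

end DyadicCount

lemma exists_dyadic_scale {T K : ℕ} (hT : 1 ≤ T) {x : ℝ≥0∞} (hx : x ≠ 0)
    (hxK : x ≤ ((2 : ℝ≥0∞) ^ (T * K))⁻¹) :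
    ∃ M, K < M ∧ ((2 : ℝ≥0∞) ^ (T * M))⁻¹ < x ∧ x ≤ 2 ^ T * ((2 : ℝ≥0∞) ^ (T * M))⁻¹ := by
  have hanti : Antitone fun M => ((2 : ℝ≥0∞) ^ (T * M))⁻¹ := fun a b hab =>
    ENNReal.inv_le_inv.2 (pow_le_pow_right₀ one_le_two (Nat.mul_le_mul_left T hab))
  have hex : ∃ M, ((2 : ℝ≥0∞) ^ (T * M))⁻¹ < x := by
    obtain ⟨j, hj⟩ := ENNReal.exists_inv_two_pow_lt hx
    refine ⟨j, lt_of_le_of_lt ?_ hj⟩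
    rw [← ENNReal.inv_pow]
    exact ENNReal.inv_le_inv.2 (pow_le_pow_right₀ one_le_two (Nat.le_mul_of_pos_left j hT))
  have hK : K < Nat.find hex := by
    by_contra! h
    exact (Nat.find_spec hex).not_ge (hxK.trans (hanti h))
  obtain ⟨M, hM⟩ : ∃ M, Nat.find hex = M + 1 := ⟨Nat.find hex - 1, by omega⟩
  refine ⟨M + 1, hM ▸ hK, hM ▸ Nat.find_spec hex, ?_⟩
  calc x ≤ ((2 : ℝ≥0∞) ^ (T * M))⁻¹ := not_lt.1 (Nat.find_min hex (by omega))
    _ = 2 ^ T * ((2 : ℝ≥0∞) ^ (T * (M + 1)))⁻¹ := by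
      rw [mul_add, mul_one, pow_add, ENNReal.mul_inv (by simp) (by simp), mul_left_comm,
        ENNReal.mul_inv_cancel (by simp) (by simp), mul_one]

lemma tsum_le_of_le_inv_sq {K : ℕ} {a : ℕ → ℝ≥0∞} (hzero : ∀ M ≤ K, a M = 0)
    (hle : ∀ M, K < M → a M ≤ ((M : ℝ≥0∞) ^ 2)⁻¹) :
    ∑' M, a M ≤ ENNReal.ofReal (2 / (K + 1)) := by
  rw [ENNReal.tsum_eq_iSup_nat]
  refine iSup_le fun N => ?_
  calc ∑ M ∈ Finset.range N, a M = ∑ M ∈ Finset.Ioo K N, a M := by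
        refine (Finset.sum_subset (fun M hM => ?_) fun M hM hM' => hzero M ?_).symm
        · simp only [Finset.mem_Ioo, Finset.mem_range] at hM ⊢; exact hM.2
        · simp only [Finset.mem_Ioo, Finset.mem_range] at hM hM'; omega
    _ ≤ ∑ M ∈ Finset.Ioo K N, ENNReal.ofReal ((M : ℝ) ^ 2)⁻¹ := by
        refine Finset.sum_le_sum fun M hM => (hle M (Finset.mem_Ioo.1 hM).1).trans_eq ?_
        have hM0 : (0 : ℝ) < M := by exact_mod_cast (Nat.zero_lt_of_lt (Finset.mem_Ioo.1 hM).1)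
        rw [ENNReal.ofReal_inv_of_pos (by positivity), ENNReal.ofReal_pow hM0.le,
          ENNReal.ofReal_natCast]
    _ = ENNReal.ofReal (∑ M ∈ Finset.Ioo K N, ((M : ℝ) ^ 2)⁻¹) :=
        (ENNReal.ofReal_sum_of_nonneg fun _ _ => by positivity).symm
    _ ≤ ENNReal.ofReal (2 / (K + 1)) := ENNReal.ofReal_le_ofReal (sum_Ioo_inv_sq_le K N)

lemma exists_inv_sq_lt_of_one_le_tsum {K : ℕ} (hK : 2 ≤ K) {a : ℕ → ℝ≥0∞}
    (hzero : ∀ M ≤ K, a M = 0) (h1 : 1 ≤ ∑' M, a M) :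
    ∃ M, K < M ∧ ((M : ℝ≥0∞) ^ 2)⁻¹ < a M := by
  by_contra! h
  have hlt : ENNReal.ofReal (2 / (K + 1)) < 1 := by
    rw [ENNReal.ofReal_lt_one, div_lt_one (by positivity)]
    exact_mod_cast Nat.lt_succ_of_le hK
  exact (h1.trans (tsum_le_of_le_inv_sq hzero h)).not_gt hlt

lemma exists_inv_sq_lt_measure_of_cover {α : Type*} [MeasurableSpace α] {ρ : Measure α}
    {F : Set α} (hρF : ρ F = 1) {c : ℕ → Set α} (hcov : F ⊆ ⋃ n, c n) {m : ℕ → ℕ} {K : ℕ}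
    (hK : 2 ≤ K) (hm : ∀ n, ρ (F ∩ c n) ≠ 0 → K < m n) :
    ∃ M, K < M ∧ ((M : ℝ≥0∞) ^ 2)⁻¹ < ρ (F ∩ ⋃ n ∈ {n | ρ (F ∩ c n) ≠ 0 ∧ m n = M}, c n) := by
  refine exists_inv_sq_lt_of_one_le_tsum hK (fun M hM => ?_) ?_
  · have : {n | ρ (F ∩ c n) ≠ 0 ∧ m n = M} = ∅ :=
      eq_empty_of_forall_notMem fun n hn => (hm n hn.1).not_ge (hn.2 ▸ hM)
    simp [this]
  have hsplit : F ⊆ (⋃ n ∈ {n | ρ (F ∩ c n) = 0}, F ∩ c n) ∪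
      ⋃ M, F ∩ ⋃ n ∈ {n | ρ (F ∩ c n) ≠ 0 ∧ m n = M}, c n := by
    intro x hx
    obtain ⟨n, hn⟩ := mem_iUnion.1 (hcov hx)
    by_cases h0 : ρ (F ∩ c n) = 0
    · exact Or.inl (mem_biUnion h0 ⟨hx, hn⟩)
    · exact Or.inr (mem_iUnion.2 ⟨m n, hx, mem_biUnion ⟨h0, rfl⟩ hn⟩)
  have hnull : ρ (⋃ n ∈ {n | ρ (F ∩ c n) = 0}, F ∩ c n) = 0 :=
    (measure_biUnion_null_iff (to_countable _)).2 fun n hn => hn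
  calc 1 = ρ F := hρF.symm
    _ ≤ ρ (⋃ M, F ∩ ⋃ n ∈ {n | ρ (F ∩ c n) ≠ 0 ∧ m n = M}, c n) :=
        (measure_mono hsplit).trans ((measure_union_le _ _).trans_eq (by rw [hnull, zero_add]))
    _ ≤ _ := measure_iUnion_le _

section MassDistribution

open Metric

variable {d T M₀ : ℕ} {ρ : Measure (EuclideanSpace ℝ (Fin d))}
  {F : Set (EuclideanSpace ℝ (Fin d))} {s : ℝ}

def DyadicCountLowerBound (T : ℕ) (ρ : Measure (EuclideanSpace ℝ (Fin d)))
    (F : Set (EuclideanSpace ℝ (Fin d))) (s : ℝ) (M₀ : ℕ) : Prop :=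
  ∀ M : ℕ, M₀ ≤ M → ∀ F' : Set (EuclideanSpace ℝ (Fin d)), MeasurableSet F' → F' ⊆ F →
    ((M : ℝ≥0∞) ^ 2)⁻¹ < ρ F' → (2 : ℝ≥0∞) ^ (s * ((T * M : ℕ) : ℝ)) ≤ dyadicCount d (T * M) F'

lemma DyadicCountLowerBound.measure_eq_zero_of_subsingleton (H : DyadicCountLowerBound T ρ F s M₀)
    (hT : 1 ≤ T) (hs : 0 < s) {F' : Set (EuclideanSpace ℝ (Fin d))} (hF' : MeasurableSet F')
    (hF'F : F' ⊆ F) (hss : F'.Subsingleton) : ρ F' = 0 := by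
  by_contra h
  obtain ⟨n, hn⟩ := ENNReal.exists_inv_nat_lt h
  have hM : (((n + M₀ + 1 : ℕ) : ℝ≥0∞) ^ 2)⁻¹ < ρ F' := by
    refine lt_of_le_of_lt (ENNReal.inv_le_inv.2 ?_) hn
    exact_mod_cast le_trans (by omega) (Nat.le_self_pow two_ne_zero (n + M₀ + 1))
  have hgt : 1 < (2 : ℝ≥0∞) ^ (s * ((T * (n + M₀ + 1) : ℕ) : ℝ)) :=
    ENNReal.one_lt_rpow (by norm_num) (mul_pos hs (by positivity))
  exact ((H _ (by omega) F' hF' hF'F hM).trans (dyadicCount_le_one_of_subsingleton hss)).not_gt hgt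

lemma inv_le_tsum_ediam_rpow {ι : Type*} {t : ι → Set (EuclideanSpace ℝ (Fin d))} {n a : ℕ}
    (hs : 0 ≤ s) (hlow : ∀ i, ((2 : ℝ≥0∞) ^ n)⁻¹ ≤ ediam (t i))
    (hup : ∀ i, ediam (t i) ≤ 2 ^ a * ((2 : ℝ≥0∞) ^ n)⁻¹)
    (hcount : (2 : ℝ≥0∞) ^ (s * n) ≤ dyadicCount d n (⋃ i, t i)) :
    (((2 * 2 ^ a + 1 : ℕ) : ℝ≥0∞) ^ d)⁻¹ ≤ ∑' i, ediam (t i) ^ s := by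
  set B : ℝ≥0∞ := ((2 * 2 ^ a + 1 : ℕ) : ℝ≥0∞) ^ d
  set w : ℝ≥0∞ := (2 : ℝ≥0∞) ^ (s * n)
  have hw0 : w ≠ 0 := (ENNReal.rpow_pos (by norm_num) (by norm_num)).ne'
  have hwtop : w ≠ ∞ := ENNReal.rpow_ne_top_of_nonneg (by positivity) (by norm_num)
  have hone : ∀ i, 1 ≤ w * ediam (t i) ^ s := fun i =>
    calc 1 = w * ((2 : ℝ≥0∞) ^ n)⁻¹ ^ s := by
          rw [← ENNReal.rpow_natCast, ← ENNReal.rpow_neg, ← ENNReal.rpow_mul,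
            ← ENNReal.rpow_add _ _ (by norm_num) (by norm_num), neg_mul, mul_comm (n : ℝ),
            add_neg_cancel, ENNReal.rpow_zero]
      _ ≤ w * ediam (t i) ^ s := by gcongr; exact hlow i
  have hwB : w * 1 ≤ w * (B * ∑' i, ediam (t i) ^ s) :=
    calc w * 1 = w := mul_one w
      _ ≤ ∑' i, dyadicCount d n (t i) := hcount.trans (dyadicCount_iUnion_le n t)
      _ ≤ ∑' i, B * (w * ediam (t i) ^ s) := ENNReal.tsum_le_tsum fun i =>
          (dyadicCount_le_of_ediam_le (hup i)).trans (le_mul_of_one_le_right' (hone i))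
      _ = w * (B * ∑' i, ediam (t i) ^ s) := by
          rw [ENNReal.tsum_mul_left, ENNReal.tsum_mul_left, mul_left_comm]
  have hB0 : B ≠ 0 := by positivity
  have hBtop : B ≠ ∞ := ENNReal.pow_ne_top (ENNReal.natCast_ne_top _)
  rw [ENNReal.inv_le_iff_le_mul (fun _ => hB0) (fun h => absurd h hBtop)]
  exact (ENNReal.mul_le_mul_iff_right hw0 hwtop).1 hwB

lemma DyadicCountLowerBound.inv_le_tsum_ediam_rpow_of_cover (H : DyadicCountLowerBound T ρ F s M₀)
    (hT : 1 ≤ T) (hs : 0 < s) (hM₀ : 2 ≤ M₀) (hF : MeasurableSet F) (hρF : ρ F = 1)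
    {t : ℕ → Set (EuclideanSpace ℝ (Fin d))} (hcov : F ⊆ ⋃ n, t n)
    (hdiam : ∀ n, ediam (t n) ≤ ((2 : ℝ≥0∞) ^ (T * M₀))⁻¹) :
    (((2 * 2 ^ T + 1 : ℕ) : ℝ≥0∞) ^ d)⁻¹ ≤ ∑' n, ⨆ _ : (t n).Nonempty, ediam (t n) ^ s := by
  -- Closures make the pieces Borel without changing their diameters.
  have hscale : ∀ n, ∃ M, ρ (F ∩ closure (t n)) ≠ 0 → M₀ < M ∧
      ((2 : ℝ≥0∞) ^ (T * M))⁻¹ < ediam (t n) ∧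
      ediam (t n) ≤ 2 ^ T * ((2 : ℝ≥0∞) ^ (T * M))⁻¹ := by
    intro n
    by_cases h0 : ρ (F ∩ closure (t n)) = 0
    · exact ⟨0, fun h => absurd h0 h⟩
    have hne : ediam (t n) ≠ 0 := fun hzero =>
      h0 (H.measure_eq_zero_of_subsingleton hT hs (hF.inter isClosed_closure.measurableSet)
        inter_subset_left (ediam_eq_zero_iff.1 (by rw [ediam_closure, hzero])
          |>.anti inter_subset_right))
    obtain ⟨M, hM⟩ := exists_dyadic_scale hT hne (hdiam n)
    exact ⟨M, fun _ => hM⟩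
  choose m hm using hscale
  obtain ⟨M, hM₀M, hM⟩ := exists_inv_sq_lt_measure_of_cover hρF
    (hcov.trans (iUnion_mono fun n => subset_closure)) hM₀ fun n hn => (hm n hn).1
  set S := {n | ρ (F ∩ closure (t n)) ≠ 0 ∧ m n = M}
  have hcount := H M hM₀M.le _ (hF.inter (MeasurableSet.biUnion (to_countable S)
    fun n _ => isClosed_closure.measurableSet)) inter_subset_left hM
  rw [biUnion_eq_iUnion] at hcount
  calc _ ≤ ∑' n : S, ediam (closure (t n)) ^ s := by
        refine inv_le_tsum_ediam_rpow hs.le (fun n => ?_) (fun n => ?_)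
          (hcount.trans (dyadicCount_mono inter_subset_right))
        · rw [ediam_closure, ← n.2.2]; exact (hm n n.2.1).2.1.le
        · rw [ediam_closure, ← n.2.2]; exact (hm n n.2.1).2.2
    _ ≤ ∑' n : S, ⨆ _ : (t n).Nonempty, ediam (t n) ^ s := by
        refine ENNReal.tsum_le_tsum fun n => ?_
        have hpos : 0 < ediam (t n) := lt_of_le_of_lt (zero_le) (hm n n.2.1).2.1
        rw [ediam_closure]
        exact le_iSup (fun _ : (t n).Nonempty => _) (ediam_pos_iff.1 hpos).nonempty
    _ ≤ _ := ENNReal.tsum_comp_le_tsum_of_injective Subtype.val_injective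
        fun n => ⨆ _ : (t n).Nonempty, ediam (t n) ^ s

end MassDistribution

open Classical in
theorem statement10_general (T d : ℕ) (hT : 1 ≤ T) :
    ∃ c : ℝ, 0 < c ∧
      ∀ (F : Set (EuclideanSpace ℝ (Fin d))) (ρ : Measure (EuclideanSpace ℝ (Fin d))),
        MeasurableSet F → IsProbabilityMeasure ρ → ρ F = 1 →
        ∀ (s : ℝ) (M₀ : ℕ), 0 < s → 2 ≤ M₀ →
          (∀ M : ℕ, M₀ ≤ M →
            ∀ F' : Set (EuclideanSpace ℝ (Fin d)), MeasurableSet F' → F' ⊆ F →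
              (((M : ℝ≥0∞)) ^ 2)⁻¹ < ρ F' →
              (2 : ℝ≥0∞) ^ (s * ((T * M : ℕ) : ℝ)) ≤
                ∑' k : Fin d → ℤ,
                  if (dyadicCube d (T * M) k ∩ F').Nonempty then (1 : ℝ≥0∞) else 0) →
          ENNReal.ofReal c ≤ μH[s] F ∧ ENNReal.ofReal s ≤ dimH F := by
  refine ⟨(((2 * 2 ^ T + 1 : ℕ) : ℝ) ^ d)⁻¹, by positivity, ?_⟩
  intro F ρ hF _ hρF s M₀ hs hM₀ H
  have hc : ENNReal.ofReal (((2 * 2 ^ T + 1 : ℕ) : ℝ) ^ d)⁻¹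
      = (((2 * 2 ^ T + 1 : ℕ) : ℝ≥0∞) ^ d)⁻¹ := by
    rw [ENNReal.ofReal_inv_of_pos (by positivity), ENNReal.ofReal_pow (by positivity),
      ENNReal.ofReal_natCast]
  have hμH : ENNReal.ofReal (((2 * 2 ^ T + 1 : ℕ) : ℝ) ^ d)⁻¹ ≤ μH[s] F := by
    rw [hc, Measure.hausdorffMeasure_apply]
    refine le_iSup₂_of_le ((2 : ℝ≥0∞) ^ (T * M₀))⁻¹ (ENNReal.inv_pos.2 (by simp)) ?_
    exact le_iInf fun t => le_iInf fun hcov => le_iInf fun hdiam =>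
      DyadicCountLowerBound.inv_le_tsum_ediam_rpow_of_cover H hT hs hM₀ hF hρF hcov hdiam
  refine ⟨hμH, le_dimH_of_hausdorffMeasure_ne_zero ?_⟩
  rw [Real.coe_toNNReal s hs.le]
  exact (lt_of_lt_of_le (ENNReal.ofReal_pos.2 (by positivity)) hμH).ne'

open Classical in
/-- **Lemma (mass distribution principle for box counting).** Fix `T, d ≥ 1`. There is
`c > 0` (depending only on `T, d`) such that: if `F ⊆ ℝ^d` is Borel, `ρ` a Borel probability
measure with `ρ(F) = 1`, and for some `M₀ ≥ 2`, `s > 0` every Borel `F' ⊆ F` with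
`ρ(F') > M⁻²` (for `M ≥ M₀`) meets at least `2^{sTM}` dyadic cubes of side `2^{-TM}`, then
`H^s(F) ≥ c`; in particular `dimH F ≥ s`. -/
theorem statement10 (T d : ℕ) (hT : 1 ≤ T) (hd : 1 ≤ d) :
    ∃ c : ℝ, 0 < c ∧
      ∀ (F : Set (EuclideanSpace ℝ (Fin d))) (ρ : Measure (EuclideanSpace ℝ (Fin d))),
        MeasurableSet F → IsProbabilityMeasure ρ → ρ F = 1 →
        ∀ (s : ℝ) (M₀ : ℕ), 0 < s → 2 ≤ M₀ →
          (∀ M : ℕ, M₀ ≤ M →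
            ∀ F' : Set (EuclideanSpace ℝ (Fin d)), MeasurableSet F' → F' ⊆ F →
              (((M : ℝ≥0∞)) ^ 2)⁻¹ < ρ F' →
              (2 : ℝ≥0∞) ^ (s * ((T * M : ℕ) : ℝ)) ≤
                ∑' k : Fin d → ℤ,
                  if (dyadicCube d (T * M) k ∩ F').Nonempty then (1 : ℝ≥0∞) else 0) →
          ENNReal.ofReal c ≤ μH[s] F ∧ ENNReal.ofReal s ≤ dimH F :=
  statement10_general T d hT
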